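/- arXiv:1110.3519 — 11 statements merged into one kernel-verified Lean document; each statement's English description precedes it below -/
import Mathlib

section
/- Let $A \in \mathbb{C}^{p\times p}$, $B\in\mathbb{C}^{q\times q}$, $C\in\mathbb{C}^{p\times q}$ and let $m,n \geq 1$ be integers. Let $G$ be a $\{1\}$-inverse of $A^m$ and $H$ a $\{1\}$-inverse of $B^n$, and suppose there exists $X_0 \in \mathbb{C}^{p\times q}$ with $A^m X_0 B^n = C$. Then the function $f : \mathbb{C}^{p\times q} \to \mathbb{C}^{p\times q}$ defined by $f(X) = X - G(A^m X B^n - C)H$ satisfies the condition of reproductivity, i.e. $f(f(X)) = f(X)$ for all $X \in \mathbb{C}^{p\times q}$. -/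
/-! Every value `f X` solves the consistent equation `A^m Y B^n = C`: writing `C = A^m X₀ B^n`,
the correction term is `G (A^m (X - X₀) B^n) H`, and `A^m G A^m = A^m`, `B^n H B^n = B^n` turn
`A^m (f X) B^n` into `A^m X B^n - A^m (X - X₀) B^n = C`. Hence the correction term vanishes at
`f X`, so `f (f X) = f X`. -/

namespace Matrix

variable {R : Type*} [Ring R] {k l m n : Type*} [Fintype l] [Fintype m] [Fintype n] [Fintype k]
  {A : Matrix k l R} {G : Matrix l k R} {B : Matrix m n R} {H : Matrix n m R}

theorem mul_mul_mul_mul_of_inner_inverse (hG : A * G * A = A) (hH : B * H * B = B)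
    (Z : Matrix l m R) : A * (G * (A * Z * B) * H) * B = A * Z * B := by
  calc A * (G * (A * Z * B) * H) * B = (A * G * A) * Z * (B * H * B) := by
        simp only [Matrix.mul_assoc]
    _ = A * Z * B := by rw [hG, hH]

theorem mul_sub_inner_inverse_correction_mul (hG : A * G * A = A) (hH : B * H * B = B)
    (X X₀ : Matrix l m R) :
    A * (X - G * (A * X * B - A * X₀ * B) * H) * B = A * X₀ * B := by
  have hdiff : A * X * B - A * X₀ * B = A * (X - X₀) * B := by
    rw [Matrix.mul_sub, Matrix.sub_mul]
  rw [hdiff, Matrix.mul_sub, Matrix.sub_mul, mul_mul_mul_mul_of_inner_inverse hG hH,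
    Matrix.mul_sub, Matrix.sub_mul, sub_sub_cancel]

end Matrix

theorem stmt_1_general (p q m n : ℕ)
    (A : Matrix (Fin p) (Fin p) ℂ) (B : Matrix (Fin q) (Fin q) ℂ)
    (C : Matrix (Fin p) (Fin q) ℂ)
    (G : Matrix (Fin p) (Fin p) ℂ) (H : Matrix (Fin q) (Fin q) ℂ)
    (hG : A ^ m * G * A ^ m = A ^ m) (hH : B ^ n * H * B ^ n = B ^ n)
    (hcons : ∃ X₀ : Matrix (Fin p) (Fin q) ℂ, A ^ m * X₀ * B ^ n = C)
    (f : Matrix (Fin p) (Fin q) ℂ → Matrix (Fin p) (Fin q) ℂ)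
    (hf : ∀ X, f X = X - G * (A ^ m * X * B ^ n - C) * H) :
    ∀ X : Matrix (Fin p) (Fin q) ℂ, f (f X) = f X := by
  obtain ⟨X₀, rfl⟩ := hcons
  intro X
  have hsolves : A ^ m * f X * B ^ n = A ^ m * X₀ * B ^ n := by
    rw [hf]
    exact Matrix.mul_sub_inner_inverse_correction_mul hG hH X X₀
  rw [hf (f X), hsolves, sub_self, Matrix.mul_zero, Matrix.zero_mul, sub_zero]

/-- Remark 2.1: the function `f(X) = X - G (A^m X B^n - C) H` is reproductive,
i.e. `f ∘ f = f`, provided the equation `A^m X B^n = C` is consistent. -/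
theorem stmt_1 (p q m n : ℕ) (hm : 1 ≤ m) (hn : 1 ≤ n)
    (A : Matrix (Fin p) (Fin p) ℂ) (B : Matrix (Fin q) (Fin q) ℂ)
    (C : Matrix (Fin p) (Fin q) ℂ)
    (G : Matrix (Fin p) (Fin p) ℂ) (H : Matrix (Fin q) (Fin q) ℂ)
    (hG : A ^ m * G * A ^ m = A ^ m) (hH : B ^ n * H * B ^ n = B ^ n)
    (hcons : ∃ X₀ : Matrix (Fin p) (Fin q) ℂ, A ^ m * X₀ * B ^ n = C)
    (f : Matrix (Fin p) (Fin q) ℂ → Matrix (Fin p) (Fin q) ℂ)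
    (hf : ∀ X, f X = X - G * (A ^ m * X * B ^ n - C) * H) :
    ∀ X : Matrix (Fin p) (Fin q) ℂ, f (f X) = f X :=
  stmt_1_general p q m n A B C G H hG hH hcons f hf
end

section
/- Let $A \in \mathbb{C}^{p\times p}$, $B\in\mathbb{C}^{q\times q}$, $C\in\mathbb{C}^{p\times q}$ and let $m,n \geq 1$ be integers. Let $G$ be a $\{1\}$-inverse of $A^m$, $H$ a $\{1\}$-inverse of $B^n$, and let $X_0 \in \mathbb{C}^{p\times q}$ be a particular solution of $A^m X B^n = C$. Define $g(Y) = X_0 + Y - G A^m Y B^n H$. Then $g(g(Y)) = g(Y) + (X_0 - GCH)$ for all $Y$; consequently $g$ satisfies the condition of reproductivity ($g \circ g = g$) if and only if $X_0 = GCH$. -/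
/-- Remark 2.2: with `g(Y) = X₀ + Y - G A^m Y B^n H` one has
`g(g(Y)) = g(Y) + (X₀ - G C H)`, hence `g` is reproductive iff `X₀ = G C H`. -/
theorem stmt_4 (p q m n : ℕ) (hm : 1 ≤ m) (hn : 1 ≤ n)
    (A : Matrix (Fin p) (Fin p) ℂ) (B : Matrix (Fin q) (Fin q) ℂ)
    (C : Matrix (Fin p) (Fin q) ℂ)
    (G : Matrix (Fin p) (Fin p) ℂ) (H : Matrix (Fin q) (Fin q) ℂ)
    (hG : A ^ m * G * A ^ m = A ^ m) (hH : B ^ n * H * B ^ n = B ^ n)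
    (X₀ : Matrix (Fin p) (Fin q) ℂ) (hX₀ : A ^ m * X₀ * B ^ n = C)
    (g : Matrix (Fin p) (Fin q) ℂ → Matrix (Fin p) (Fin q) ℂ)
    (hg : ∀ Y, g Y = X₀ + Y - G * (A ^ m) * Y * (B ^ n) * H) :
    (∀ Y : Matrix (Fin p) (Fin q) ℂ, g (g Y) = g Y + (X₀ - G * C * H)) ∧
    (g ∘ g = g ↔ X₀ = G * C * H) := by
  have h1 : G * A ^ m * X₀ * B ^ n * H = G * C * H := by
    rw [show G * A ^ m * X₀ * B ^ n = G * (A ^ m * X₀ * B ^ n) by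
      simp only [Matrix.mul_assoc], hX₀]
  have h2 : ∀ Y : Matrix (Fin p) (Fin q) ℂ, G * A ^ m * (G * A ^ m * Y * B ^ n * H) * B ^ n * H
      = G * A ^ m * Y * B ^ n * H := by
    intro Y
    calc G * A ^ m * (G * A ^ m * Y * B ^ n * H) * B ^ n * H
        = G * (A ^ m * G * A ^ m * (Y * (B ^ n * H * B ^ n * H))) := by
          simp only [Matrix.mul_assoc]
      _ = G * A ^ m * Y * B ^ n * H := by
          rw [hG, show B ^ n * H * B ^ n * H = B ^ n * H by rw [hH]]
          simp only [Matrix.mul_assoc]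
  have key : ∀ Y, g (g Y) = g Y + (X₀ - G * C * H) := by
    intro Y
    rw [hg (g Y), hg Y]
    rw [show G * A ^ m * (X₀ + Y - G * A ^ m * Y * B ^ n * H) * B ^ n * H
        = G * A ^ m * X₀ * B ^ n * H + G * A ^ m * Y * B ^ n * H
          - G * A ^ m * (G * A ^ m * Y * B ^ n * H) * B ^ n * H by
      simp only [Matrix.mul_add, Matrix.mul_sub, Matrix.add_mul, Matrix.sub_mul]]
    rw [h1, h2]
    abel
  refine ⟨key, ?_⟩
  constructor
  · intro h
    have := key 0
    rw [show g (g 0) = g 0 from congrFun h 0] at this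
    exact sub_eq_zero.mp (left_eq_add.mp this)
  · intro h
    funext Y
    simp [key Y, h]
end

section
/- Let $A \in \mathbb{C}^{p\times p}$, $B \in \mathbb{C}^{p\times q}$, $D \in \mathbb{C}^{q\times q}$, $E \in \mathbb{C}^{p\times q}$ and let $m,n \geq 1$ be integers. The matrix equations $A^m X = B$ and $X D^n = E$ have a common solution $X \in \mathbb{C}^{p\times q}$ if and only if each equation separately has a solution and $A^m E = B D^n$. -/
/-!
A matrix `a` has an inner inverse `g` (`a * g * a = a`): factor `a` through its range and invert
the two factors on the appropriate side. Given solutions `x₁` of `a * X = b` and `x₂` of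
`X * d = e`, the matrix `g * b + (1 - g * a) * x₂` solves both: `a * (1 - g * a) = 0` gives the
first equation, and the compatibility `a * e = b * d` turns `g * b * d` into `g * a * x₂ * d`.
-/

theorem LinearMap.exists_comp_comp_self_eq {K V W : Type*} [Field K] [AddCommGroup V]
    [Module K V] [AddCommGroup W] [Module K W] (f : V →ₗ[K] W) :
    ∃ g : W →ₗ[K] V, f ∘ₗ g ∘ₗ f = f := by
  obtain ⟨s, hs⟩ := f.rangeRestrict.exists_rightInverse_of_surjective f.range_rangeRestrict
  obtain ⟨π, hπ⟩ := (range f).subtype.exists_leftInverse_of_injective (range f).ker_subtype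
  refine ⟨s ∘ₗ π, ?_⟩
  calc f ∘ₗ (s ∘ₗ π) ∘ₗ f
      = (range f).subtype ∘ₗ (f.rangeRestrict ∘ₗ s) ∘ₗ (π ∘ₗ (range f).subtype) ∘ₗ
          f.rangeRestrict := rfl
    _ = f := by rw [hs, hπ]; rfl

theorem Matrix.exists_mul_mul_self_eq {K m n : Type*} [Field K] [Fintype m] [Fintype n]
    [DecidableEq m] [DecidableEq n] (a : Matrix m n K) :
    ∃ g : Matrix n m K, a * g * a = a := by
  obtain ⟨g, hg⟩ := (Matrix.toLin' a).exists_comp_comp_self_eq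
  refine ⟨LinearMap.toMatrix' g, Matrix.toLin'.injective ?_⟩
  rwa [Matrix.toLin'_mul, Matrix.toLin'_mul, Matrix.toLin'_toMatrix']

theorem Matrix.exists_mul_eq_and_mul_eq_iff {K l m n o : Type*} [Field K] [Fintype l]
    [Fintype m] [Fintype n] [DecidableEq l] [DecidableEq m]
    (a : Matrix l m K) (b : Matrix l n K) (d : Matrix n o K) (e : Matrix m o K) :
    (∃ x : Matrix m n K, a * x = b ∧ x * d = e) ↔
      (∃ x : Matrix m n K, a * x = b) ∧ (∃ x : Matrix m n K, x * d = e) ∧ a * e = b * d := by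
  constructor
  · rintro ⟨x, rfl, rfl⟩
    exact ⟨⟨x, rfl⟩, ⟨x, rfl⟩, (Matrix.mul_assoc _ _ _).symm⟩
  · rintro ⟨⟨x₁, rfl⟩, ⟨x₂, rfl⟩, hcomp⟩
    obtain ⟨g, hg⟩ := a.exists_mul_mul_self_eq
    have hga : a * (1 - g * a) = 0 := by
      rw [Matrix.mul_sub, Matrix.mul_one, ← Matrix.mul_assoc, hg, sub_self]
    refine ⟨g * (a * x₁) + (1 - g * a) * x₂, ?_, ?_⟩
    · rw [Matrix.mul_add, ← Matrix.mul_assoc, ← Matrix.mul_assoc, hg, ← Matrix.mul_assoc, hga,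
        Matrix.zero_mul, add_zero]
    · rw [Matrix.add_mul, Matrix.mul_assoc, ← hcomp, Matrix.sub_mul, Matrix.one_mul,
        Matrix.sub_mul, ← Matrix.mul_assoc g a, Matrix.mul_assoc (g * a)]
      abel

theorem stmt_6_general (p q m n : ℕ)
    (A : Matrix (Fin p) (Fin p) ℂ) (B : Matrix (Fin p) (Fin q) ℂ)
    (D : Matrix (Fin q) (Fin q) ℂ) (E : Matrix (Fin p) (Fin q) ℂ) :
    (∃ X : Matrix (Fin p) (Fin q) ℂ, A ^ m * X = B ∧ X * D ^ n = E) ↔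
    ((∃ X : Matrix (Fin p) (Fin q) ℂ, A ^ m * X = B) ∧
     (∃ X : Matrix (Fin p) (Fin q) ℂ, X * D ^ n = E) ∧
     A ^ m * E = B * D ^ n) :=
  Matrix.exists_mul_eq_and_mul_eq_iff (A ^ m) B (D ^ n) E

/-- Lemma 2.2: the equations `A^m X = B` and `X D^n = E` have a common solution
iff each has a solution separately and `A^m E = B D^n`. -/
theorem stmt_6 (p q m n : ℕ) (hm : 1 ≤ m) (hn : 1 ≤ n)
    (A : Matrix (Fin p) (Fin p) ℂ) (B : Matrix (Fin p) (Fin q) ℂ)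
    (D : Matrix (Fin q) (Fin q) ℂ) (E : Matrix (Fin p) (Fin q) ℂ) :
    (∃ X : Matrix (Fin p) (Fin q) ℂ, A ^ m * X = B ∧ X * D ^ n = E) ↔
    ((∃ X : Matrix (Fin p) (Fin q) ℂ, A ^ m * X = B) ∧
     (∃ X : Matrix (Fin p) (Fin q) ℂ, X * D ^ n = E) ∧
     A ^ m * E = B * D ^ n) :=
  stmt_6_general p q m n A B D E
end

section
/- Let $A \in \mathbb{C}^{p\times p}$, $B \in \mathbb{C}^{p\times q}$, $D \in \mathbb{C}^{q\times q}$, $E \in \mathbb{C}^{p\times q}$ and let $m,n \geq 1$ be integers. Let $G$ be a $\{1\}$-inverse of $A^m$, $H$ a $\{1\}$-inverse of $D^n$, and suppose the system $A^m X = B \wedge X D^n = E$ is consistent. Setting $X_1 = GB + EH - G A^m E H$, the function $f(X) = X_1 + (I - G A^m) X (I - D^n H)$ satisfies the condition of reproductivity, i.e. $f(f(X)) = f(X)$ for all $X \in \mathbb{C}^{p\times q}$. -/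
/-- Remark 2.4: the function `f(X) = X₁ + (I - G A^m) X (I - D^n H)` is
reproductive, i.e. `f(f(X)) = f(X)` for all `X`. -/
theorem stmt_8 (p q m n : ℕ) (hm : 1 ≤ m) (hn : 1 ≤ n)
    (A : Matrix (Fin p) (Fin p) ℂ) (B : Matrix (Fin p) (Fin q) ℂ)
    (D : Matrix (Fin q) (Fin q) ℂ) (E : Matrix (Fin p) (Fin q) ℂ)
    (G : Matrix (Fin p) (Fin p) ℂ) (H : Matrix (Fin q) (Fin q) ℂ)
    (hG : A ^ m * G * A ^ m = A ^ m) (hH : D ^ n * H * D ^ n = D ^ n)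
    (hcons : ∃ X : Matrix (Fin p) (Fin q) ℂ, A ^ m * X = B ∧ X * D ^ n = E)
    (X₁ : Matrix (Fin p) (Fin q) ℂ)
    (hX₁ : X₁ = G * B + E * H - G * (A ^ m) * E * H)
    (f : Matrix (Fin p) (Fin q) ℂ → Matrix (Fin p) (Fin q) ℂ)
    (hf : ∀ X, f X = X₁ + (1 - G * (A ^ m)) * X * (1 - (D ^ n) * H)) :
    ∀ X : Matrix (Fin p) (Fin q) ℂ, f (f X) = f X := by
  obtain ⟨X₀, hB, hE⟩ := hcons
  -- P := G * A^m and Q := D^n * H are idempotent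
  have hPP : G * A ^ m * (G * A ^ m) = G * A ^ m := by
    calc G * A ^ m * (G * A ^ m) = G * (A ^ m * G * A ^ m) := by simp only [Matrix.mul_assoc]
    _ = G * A ^ m := by rw [hG]
  have hQQ : D ^ n * H * (D ^ n * H) = D ^ n * H := by
    calc D ^ n * H * (D ^ n * H) = D ^ n * H * D ^ n * H := by simp only [Matrix.mul_assoc]
    _ = D ^ n * H := by rw [hH]
  have h1 : G * A ^ m * (G * B) = G * B := by
    rw [← hB]
    calc G * A ^ m * (G * (A ^ m * X₀)) = G * (A ^ m * G * A ^ m) * X₀ := by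
          simp only [Matrix.mul_assoc]
    _ = G * (A ^ m * X₀) := by rw [hG, Matrix.mul_assoc]
  have h2 : E * H * (D ^ n * H) = E * H := by
    rw [← hE]
    calc X₀ * D ^ n * H * (D ^ n * H) = X₀ * (D ^ n * H * D ^ n) * H := by
          simp only [Matrix.mul_assoc]
    _ = X₀ * D ^ n * H := by rw [hH]
  have h3 : G * A ^ m * (G * A ^ m * E * H) = G * A ^ m * E * H := by
    calc G * A ^ m * (G * A ^ m * E * H) = G * (A ^ m * G * A ^ m) * E * H := by
          simp only [Matrix.mul_assoc]
    _ = G * A ^ m * E * H := by rw [hG]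
  have h4 : G * A ^ m * (E * H) * (D ^ n * H) = G * A ^ m * (E * H) := by
    rw [Matrix.mul_assoc, h2]
  have hA : (1 - G * A ^ m) * X₁ = E * H - G * A ^ m * (E * H) := by
    rw [hX₁]
    simp only [Matrix.mul_sub, Matrix.mul_add, Matrix.sub_mul, Matrix.one_mul]
    rw [h1, h3]
    abel
  have hkey : (1 - G * A ^ m) * X₁ * (1 - D ^ n * H) = 0 := by
    rw [hA]
    simp only [Matrix.mul_sub, Matrix.sub_mul, Matrix.mul_one]
    rw [h2, h4]
    abel
  have hPid : (1 - G * A ^ m) * (1 - G * A ^ m) = 1 - G * A ^ m := by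
    rw [Matrix.mul_sub, Matrix.mul_one, Matrix.sub_mul, Matrix.one_mul, hPP]
    abel
  have hQid : (1 - D ^ n * H) * (1 - D ^ n * H) = 1 - D ^ n * H := by
    rw [Matrix.mul_sub, Matrix.mul_one, Matrix.sub_mul, Matrix.one_mul, hQQ]
    abel
  have h5 : (1 - G * A ^ m) * ((1 - G * A ^ m) * X₁ * (1 - D ^ n * H)) = 0 := by
    rw [hkey, Matrix.mul_zero]
  intro X
  rw [hf X, hf]
  congr 1
  have h6 : (1 - G * A ^ m) * ((1 - G * A ^ m) * X * (1 - D ^ n * H)) * (1 - D ^ n * H)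
      = (1 - G * A ^ m) * (1 - G * A ^ m) * X * ((1 - D ^ n * H) * (1 - D ^ n * H)) := by
    simp only [Matrix.mul_assoc]
  rw [Matrix.mul_add, Matrix.add_mul, hkey, h6, hPid, hQid, zero_add]
end

section
/- Let $A \in \mathbb{C}^{p\times p}$, $B \in \mathbb{C}^{p\times q}$, $D \in \mathbb{C}^{q\times q}$, $E \in \mathbb{C}^{p\times q}$ and let $m,n \geq 1$ be integers. Let $G$ be a $\{1\}$-inverse of $A^m$, $H$ a $\{1\}$-inverse of $D^n$, set $X_1 = GB + EH - G A^m E H$, and let $X_0$ be a particular solution of the system $A^m X = B \wedge X D^n = E$. Define $g(Y) = X_0 + (I - G A^m) Y (I - D^n H)$. Then $g(g(Y)) = g(Y) + (X_0 - X_1)$ for all $Y$; consequently $g$ satisfies the condition of reproductivity ($g \circ g = g$) if and only if $X_0 = X_1$. -/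
lemma idem_compl {R : Type*} [Ring R] (x : R) (h : x * x = x) :
    (1 - x) * (1 - x) = 1 - x := by
  rw [sub_mul, mul_sub, mul_sub, h]
  simp

/-- Remark 2.5: with `g(Y) = X₀ + (I - G A^m) Y (I - D^n H)` one has
`g(g(Y)) = g(Y) + (X₀ - X₁)`, hence `g` is reproductive iff `X₀ = X₁`. -/
theorem stmt_11 (p q m n : ℕ) (hm : 1 ≤ m) (hn : 1 ≤ n)
    (A : Matrix (Fin p) (Fin p) ℂ) (B : Matrix (Fin p) (Fin q) ℂ)
    (D : Matrix (Fin q) (Fin q) ℂ) (E : Matrix (Fin p) (Fin q) ℂ)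
    (G : Matrix (Fin p) (Fin p) ℂ) (H : Matrix (Fin q) (Fin q) ℂ)
    (hG : A ^ m * G * A ^ m = A ^ m) (hH : D ^ n * H * D ^ n = D ^ n)
    (X₁ : Matrix (Fin p) (Fin q) ℂ)
    (hX₁ : X₁ = G * B + E * H - G * (A ^ m) * E * H)
    (X₀ : Matrix (Fin p) (Fin q) ℂ)
    (hX₀ : A ^ m * X₀ = B ∧ X₀ * D ^ n = E)
    (g : Matrix (Fin p) (Fin q) ℂ → Matrix (Fin p) (Fin q) ℂ)
    (hg : ∀ Y, g Y = X₀ + (1 - G * (A ^ m)) * Y * (1 - (D ^ n) * H)) :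
    (∀ Y : Matrix (Fin p) (Fin q) ℂ, g (g Y) = g Y + (X₀ - X₁)) ∧
    (g ∘ g = g ↔ X₀ = X₁) := by
  set P := 1 - G * (A ^ m) with hPdef
  set Q := 1 - (D ^ n) * H with hQdef
  have hP : P * P = P := by
    apply idem_compl
    rw [mul_assoc, ← mul_assoc (A ^ m), hG]
  have hQ : Q * Q = Q := by
    apply idem_compl
    rw [← mul_assoc, mul_assoc (D ^ n), ← mul_assoc (D ^ n), hH]
  have hPXQ : P * X₀ * Q = X₀ - X₁ := by
    rw [hPdef, hQdef, hX₁]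
    simp only [Matrix.sub_mul, Matrix.mul_sub, Matrix.one_mul, Matrix.mul_one]
    have h1 : G * A ^ m * X₀ = G * B := by rw [Matrix.mul_assoc, hX₀.1]
    have h2 : X₀ * (D ^ n * H) = E * H := by rw [← Matrix.mul_assoc, hX₀.2]
    have h3 : G * A ^ m * X₀ * (D ^ n * H) = G * A ^ m * E * H := by
      rw [Matrix.mul_assoc (G * A ^ m), ← Matrix.mul_assoc X₀, hX₀.2]
      simp [Matrix.mul_assoc]
    rw [h3, h1, h2]
    abel
  have key : ∀ Y : Matrix (Fin p) (Fin q) ℂ, g (g Y) = g Y + (X₀ - X₁) := by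
    intro Y
    rw [hg (g Y), hg Y, Matrix.mul_add, Matrix.add_mul, hPXQ]
    have : P * (P * Y * Q) * Q = P * Y * Q := by
      rw [← Matrix.mul_assoc, ← Matrix.mul_assoc, hP, Matrix.mul_assoc, Matrix.mul_assoc, hQ, ← Matrix.mul_assoc]
    rw [this]
    abel
  refine ⟨key, ?_, ?_⟩
  · intro h
    have h0 : g (g 0) = g 0 := by rw [show g (g 0) = (g ∘ g) 0 from rfl, h]
    have := key 0
    rw [h0, left_eq_add, sub_eq_zero] at this
    exact this
  · intro h
    funext Y
    simp [Function.comp, key Y, h]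
end

section
/- Let $A, \bar{A} \in \mathbb{C}^{p\times p}$ and $k \geq 1$ an integer, where $\bar{A}$ is a $k$-commutative $\{1\}$-inverse of $A$, i.e. $A\bar{A}A = A$ and $A^k \bar{A} = \bar{A} A^k$. Then $A^k \bar{A}^k A^k = A^k$. -/
/-- Lemma 2.5: if `Ā` is a `k`-commutative {1}-inverse of `A`, then
`A^k Ā^k A^k = A^k`. -/
theorem stmt_13 (p k : ℕ) (hk : 1 ≤ k)
    (A Abar : Matrix (Fin p) (Fin p) ℂ)
    (h1 : A * Abar * A = A) (h2 : A ^ k * Abar = Abar * A ^ k) :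
    A ^ k * Abar ^ k * A ^ k = A ^ k := by
  obtain ⟨n, rfl⟩ : ∃ n, k = n + 1 := ⟨k - 1, (Nat.succ_pred_eq_of_pos hk).symm⟩
  have hA : A ^ (n + 1) * Abar * A = A ^ (n + 1) := by
    calc A ^ (n + 1) * Abar * A = A ^ n * (A * Abar * A) := by
          rw [pow_succ]; noncomm_ring
      _ = A ^ n * A := by rw [h1]
      _ = A ^ (n + 1) := by rw [pow_succ]
  have key : ∀ m, A ^ (n + 1) * Abar ^ m * A ^ m = A ^ (n + 1) := by
    intro m
    induction m with
    | zero => simp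
    | succ m ih =>
      calc A ^ (n + 1) * Abar ^ (m + 1) * A ^ (m + 1)
          = (A ^ (n + 1) * Abar) * Abar ^ m * A ^ m * A := by
            rw [pow_succ' Abar, pow_succ A m]; noncomm_ring
        _ = Abar * (A ^ (n + 1) * Abar ^ m * A ^ m) * A := by
            rw [h2]; noncomm_ring
        _ = Abar * A ^ (n + 1) * A := by rw [ih]
        _ = A ^ (n + 1) * Abar * A := by rw [h2]
        _ = A ^ (n + 1) := hA
  exact key (n + 1)
end

section
/- Let $A, \bar{A} \in \mathbb{C}^{p\times p}$ and $k \geq 1$ an integer, where $\bar{A}$ is a $k$-commutative $\{1\}$-inverse of $A$, i.e. $A\bar{A}A = A$ and $A^k \bar{A} = \bar{A} A^k$. Then for any particular solution $X_0 \in \mathbb{C}^{p\times p}$ of the system $AXA = A \wedge A^k X = X A^k$, the equalities $X_0 A^k \bar{A}^k = A^k \bar{A}^{k+1}$ and $\bar{A}^k A^k X_0 = A^k \bar{A}^{k+1}$ hold. -/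
/-- Lemma 2.6: for any particular solution `X₀` of the system
`A X A = A ∧ A^k X = X A^k`, one has `X₀ A^k Ā^k = A^k Ā^(k+1)` and
`Ā^k A^k X₀ = A^k Ā^(k+1)`. -/
theorem stmt_14 (p k : ℕ) (hk : 1 ≤ k)
    (A Abar : Matrix (Fin p) (Fin p) ℂ)
    (h1 : A * Abar * A = A) (h2 : A ^ k * Abar = Abar * A ^ k) :
    ∀ X₀ : Matrix (Fin p) (Fin p) ℂ,
      (A * X₀ * A = A ∧ A ^ k * X₀ = X₀ * A ^ k) →
      X₀ * A ^ k * Abar ^ k = A ^ k * Abar ^ (k + 1) ∧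
      Abar ^ k * A ^ k * X₀ = A ^ k * Abar ^ (k + 1) := by
  rintro X₀ ⟨hx1, hx2⟩
  obtain ⟨m, rfl⟩ : ∃ m, k = m + 1 := ⟨k - 1, (Nat.succ_pred_eq_of_pos hk).symm⟩
  have c : ∀ j : ℕ, A ^ (m + 1) * Abar ^ j = Abar ^ j * A ^ (m + 1) := by
    intro j
    induction j with
    | zero => simp
    | succ n ih =>
        rw [pow_succ Abar n, ← mul_assoc, ih, mul_assoc, h2, ← mul_assoc]
  have g : A * Abar * A ^ (m + 1) = A ^ (m + 1) := by
    rw [pow_succ' A m, ← mul_assoc, h1]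
  have g' : A ^ (m + 1) * Abar * A = A ^ (m + 1) := by
    rw [pow_succ A m, mul_assoc (A ^ m) A Abar, mul_assoc (A ^ m) (A * Abar) A, h1]
  have f1 : X₀ * A ^ (m + 2) = A ^ (m + 1) := by
    rw [pow_succ A (m + 1), ← mul_assoc, ← hx2, pow_succ A m,
      mul_assoc (A ^ m) A X₀, mul_assoc (A ^ m) (A * X₀) A, hx1]
  have f2 : A ^ (m + 2) * X₀ = A ^ (m + 1) := by
    rw [pow_succ' A (m + 1), mul_assoc, hx2, pow_succ' A m,
      ← mul_assoc X₀ A (A ^ m), ← mul_assoc A (X₀ * A) (A ^ m), ← mul_assoc A X₀ A, hx1]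
  constructor
  · calc X₀ * A ^ (m + 1) * Abar ^ (m + 1)
        = X₀ * (A ^ (m + 1) * Abar ^ (m + 1)) := by rw [mul_assoc]
      _ = X₀ * (A * Abar * A ^ (m + 1) * Abar ^ (m + 1)) := by rw [g]
      _ = X₀ * (A * (Abar * (A ^ (m + 1) * Abar ^ (m + 1)))) := by
          simp only [mul_assoc]
      _ = X₀ * (A * (Abar * (Abar ^ (m + 1) * A ^ (m + 1)))) := by rw [c]
      _ = X₀ * (A * (Abar * Abar ^ (m + 1) * A ^ (m + 1))) := by
          simp only [mul_assoc]
      _ = X₀ * (A * (Abar ^ (m + 2) * A ^ (m + 1))) := by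
          rw [← pow_succ' Abar (m + 1)]
      _ = X₀ * (A * (A ^ (m + 1) * Abar ^ (m + 2))) := by rw [← c]
      _ = X₀ * (A * A ^ (m + 1) * Abar ^ (m + 2)) := by simp only [mul_assoc]
      _ = X₀ * (A ^ (m + 2) * Abar ^ (m + 2)) := by rw [← pow_succ' A (m + 1)]
      _ = X₀ * A ^ (m + 2) * Abar ^ (m + 2) := by rw [mul_assoc]
      _ = A ^ (m + 1) * Abar ^ (m + 2) := by rw [f1]
  · calc Abar ^ (m + 1) * A ^ (m + 1) * X₀
        = Abar ^ (m + 1) * (A ^ (m + 1) * Abar * A) * X₀ := by rw [g']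
      _ = Abar ^ (m + 1) * Abar * (A ^ (m + 1) * A) * X₀ := by
          rw [h2]; simp only [mul_assoc]
      _ = Abar ^ (m + 2) * A ^ (m + 2) * X₀ := by
          rw [← pow_succ Abar (m + 1), ← pow_succ A (m + 1)]
      _ = Abar ^ (m + 2) * A ^ (m + 1) := by rw [mul_assoc, f2]
      _ = A ^ (m + 1) * Abar ^ (m + 2) := (c (m + 2)).symm
end

section
/- Let $A, \bar{A} \in \mathbb{C}^{p\times p}$ and $k \geq 1$ an integer, where $\bar{A}$ is a $k$-commutative $\{1\}$-inverse of $A$, i.e. $A\bar{A}A = A$ and $A^k \bar{A} = \bar{A} A^k$. Set $\hat{X} = \bar{A} A \bar{A}$. Then for every $X \in \mathbb{C}^{p\times p}$ the equivalence $(AXA = A \wedge A^k X = X A^k) \iff X = \hat{X} + X - (I - \bar{A}A) X A^k \bar{A}^k - \bar{A}^k A^k X (I - A\bar{A}) - \bar{A} A X A \bar{A}$ holds. -/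
theorem aux_ring {R : Type*} [Ring R] (k : ℕ) (hk : 1 ≤ k) (A Abar : R)
    (h1 : A * Abar * A = A) (h2 : A ^ k * Abar = Abar * A ^ k) (X : R) :
    (A * X * A = A ∧ A ^ k * X = X * A ^ k) ↔
      X = Abar * A * Abar + X - (1 - Abar * A) * X * A ^ k * Abar ^ k -
        Abar ^ k * A ^ k * X * (1 - A * Abar) - Abar * A * X * A * Abar := by
  obtain ⟨m, rfl⟩ : ∃ m, k = m + 1 := ⟨k - 1, by omega⟩
  -- basic identities
  have eL : Abar * A * A ^ (m + 1) = A ^ (m + 1) := by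
    calc Abar * A * A ^ (m + 1) = Abar * A ^ (m + 1) * A := by
          rw [mul_assoc, mul_assoc, ← pow_succ, ← pow_succ']
      _ = A ^ (m + 1) * Abar * A := by rw [← h2]
      _ = A ^ m * (A * Abar * A) := by rw [pow_succ]; noncomm_ring
      _ = A ^ (m + 1) := by rw [h1, ← pow_succ]
  have eR : A ^ (m + 1) * A * Abar = A ^ (m + 1) := by
    calc A ^ (m + 1) * A * Abar = A * (A ^ (m + 1) * Abar) := by
          rw [← pow_succ, pow_succ', mul_assoc]
      _ = A * (Abar * A ^ (m + 1)) := by rw [h2]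
      _ = (A * Abar * A) * A ^ m := by rw [pow_succ']; noncomm_ring
      _ = A ^ (m + 1) := by rw [h1, ← pow_succ']
  have eL2 : A * Abar * A ^ (m + 1) = A ^ (m + 1) := by
    calc A * Abar * A ^ (m + 1) = (A * Abar * A) * A ^ m := by
          rw [pow_succ']; noncomm_ring
      _ = A ^ (m + 1) := by rw [h1, ← pow_succ']
  have eR2 : A ^ (m + 1) * Abar * A = A ^ (m + 1) := by
    calc A ^ (m + 1) * Abar * A = A ^ m * (A * Abar * A) := by
          rw [pow_succ]; noncomm_ring
      _ = A ^ (m + 1) := by rw [h1, ← pow_succ]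
  have eL' : Abar * A ^ (m + 1 + 1) = A ^ (m + 1) := by
    rw [pow_succ', ← mul_assoc, eL]
  have L : ∀ j : ℕ, Abar ^ j * A ^ (m + 1 + j) = A ^ (m + 1) := by
    intro j; induction j with
    | zero => simp
    | succ n ih =>
      have step : Abar * A ^ (m + 1 + (n + 1)) = A ^ (m + 1 + n) := by
        have e : A ^ (m + 1 + (n + 1)) = A ^ (m + 1 + 1) * A ^ n := by
          rw [← pow_add]; ring_nf
        rw [e, ← mul_assoc, eL', ← pow_add]
      calc Abar ^ (n + 1) * A ^ (m + 1 + (n + 1))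
          = Abar ^ n * (Abar * A ^ (m + 1 + (n + 1))) := by rw [pow_succ, mul_assoc]
        _ = Abar ^ n * A ^ (m + 1 + n) := by rw [step]
        _ = A ^ (m + 1) := ih
  have hc : A ^ (m + 1) * Abar ^ (m + 1) = Abar ^ (m + 1) * A ^ (m + 1) :=
    (Commute.pow_right (h2 : Commute _ _) (m + 1))
  have Lk : Abar ^ (m + 1) * A ^ (m + 1) * A ^ (m + 1) = A ^ (m + 1) := by
    rw [mul_assoc, ← pow_add]; exact L (m + 1)
  constructor
  · rintro ⟨hx1, hx2⟩
    have w : Abar * A * X * A * Abar = Abar * A * Abar := by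
      calc Abar * A * X * A * Abar = Abar * (A * X * A) * Abar := by noncomm_ring
        _ = Abar * A * Abar := by rw [hx1]
    have t1 : (1 - Abar * A) * X * A ^ (m + 1) * Abar ^ (m + 1) = 0 := by
      have inner : (1 - Abar * A) * X * A ^ (m + 1) = 0 := by
        have e : (1 - Abar * A) * X * A ^ (m + 1)
            = A ^ (m + 1) * X - (Abar * A * A ^ (m + 1)) * X := by
          rw [mul_assoc, mul_assoc, ← hx2]; noncomm_ring
        rw [e, eL, sub_self]
      rw [inner, zero_mul]
    have t2 : Abar ^ (m + 1) * A ^ (m + 1) * X * (1 - A * Abar) = 0 := by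
      have inner : A ^ (m + 1) * X * (1 - A * Abar) = 0 := by
        have e : A ^ (m + 1) * X * (1 - A * Abar)
            = X * A ^ (m + 1) - X * (A ^ (m + 1) * A * Abar) := by
          rw [hx2]; noncomm_ring
        rw [e, eR, sub_self]
      calc Abar ^ (m + 1) * A ^ (m + 1) * X * (1 - A * Abar)
          = Abar ^ (m + 1) * (A ^ (m + 1) * X * (1 - A * Abar)) := by noncomm_ring
        _ = 0 := by rw [inner, mul_zero]
    rw [t1, t2, w]
    abel
  · intro hx
    have key : Abar * A * Abar - (1 - Abar * A) * X * A ^ (m + 1) * Abar ^ (m + 1) -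
        Abar ^ (m + 1) * A ^ (m + 1) * X * (1 - A * Abar) - Abar * A * X * A * Abar = 0 := by
      have h := sub_eq_zero.mpr hx.symm
      rw [← h]; abel
    -- first: A * X * A = A
    have q1 : A * (Abar * A * Abar) * A = A := by
      calc A * (Abar * A * Abar) * A = (A * Abar * A) * (Abar * A) := by noncomm_ring
        _ = A * (Abar * A) := by rw [h1]
        _ = A := by rw [← mul_assoc, h1]
    have q2 : A * ((1 - Abar * A) * X * A ^ (m + 1) * Abar ^ (m + 1)) * A = 0 := by
      have z : A * (1 - Abar * A) = 0 := by
        rw [mul_sub, mul_one, ← mul_assoc, h1, sub_self]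
      calc A * ((1 - Abar * A) * X * A ^ (m + 1) * Abar ^ (m + 1)) * A
          = (A * (1 - Abar * A)) * (X * A ^ (m + 1) * Abar ^ (m + 1) * A) := by noncomm_ring
        _ = 0 := by rw [z, zero_mul]
    have q3 : A * (Abar ^ (m + 1) * A ^ (m + 1) * X * (1 - A * Abar)) * A = 0 := by
      have z : (1 - A * Abar) * A = 0 := by
        rw [sub_mul, one_mul, h1, sub_self]
      calc A * (Abar ^ (m + 1) * A ^ (m + 1) * X * (1 - A * Abar)) * A
          = (A * (Abar ^ (m + 1) * A ^ (m + 1) * X)) * ((1 - A * Abar) * A) := by noncomm_ring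
        _ = 0 := by rw [z, mul_zero]
    have q4 : A * (Abar * A * X * A * Abar) * A = A * X * A := by
      calc A * (Abar * A * X * A * Abar) * A
          = (A * Abar * A) * X * (A * Abar * A) := by noncomm_ring
        _ = A * X * A := by rw [h1]
    have hAXA : A * X * A = A := by
      have expand : A * (Abar * A * Abar - (1 - Abar * A) * X * A ^ (m + 1) * Abar ^ (m + 1) -
          Abar ^ (m + 1) * A ^ (m + 1) * X * (1 - A * Abar) - Abar * A * X * A * Abar) * A
          = A * (Abar * A * Abar) * A -
            A * ((1 - Abar * A) * X * A ^ (m + 1) * Abar ^ (m + 1)) * A -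
            A * (Abar ^ (m + 1) * A ^ (m + 1) * X * (1 - A * Abar)) * A -
            A * (Abar * A * X * A * Abar) * A := by noncomm_ring
      have h0 := expand
      rw [key, mul_zero, zero_mul, q1, q2, q3, q4] at h0
      have h0' : A - A * X * A = 0 := by rw [h0]; abel
      have := sub_eq_zero.mp h0'
      exact this.symm
    -- auxiliary with hAXA
    have s1 : A ^ (m + 1) * X * A = A ^ (m + 1) := by
      calc A ^ (m + 1) * X * A = A ^ m * (A * X * A) := by rw [pow_succ]; noncomm_ring
        _ = A ^ (m + 1) := by rw [hAXA, ← pow_succ]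
    have s2 : A * X * A ^ (m + 1) = A ^ (m + 1) := by
      calc A * X * A ^ (m + 1) = (A * X * A) * A ^ m := by rw [pow_succ']; noncomm_ring
        _ = A ^ (m + 1) := by rw [hAXA, ← pow_succ']
    -- left multiplication by A^k
    have r1 : A ^ (m + 1) * (Abar * A * Abar) = A ^ (m + 1) * Abar := by
      calc A ^ (m + 1) * (Abar * A * Abar) = (A ^ (m + 1) * Abar * A) * Abar := by noncomm_ring
        _ = A ^ (m + 1) * Abar := by rw [eR2]
    have r2 : A ^ (m + 1) * ((1 - Abar * A) * X * A ^ (m + 1) * Abar ^ (m + 1)) = 0 := by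
      have z : A ^ (m + 1) * (1 - Abar * A) = 0 := by
        rw [mul_sub, mul_one, ← mul_assoc, eR2, sub_self]
      calc A ^ (m + 1) * ((1 - Abar * A) * X * A ^ (m + 1) * Abar ^ (m + 1))
          = (A ^ (m + 1) * (1 - Abar * A)) * (X * A ^ (m + 1) * Abar ^ (m + 1)) := by noncomm_ring
        _ = 0 := by rw [z, zero_mul]
    have r3 : A ^ (m + 1) * (Abar ^ (m + 1) * A ^ (m + 1) * X * (1 - A * Abar))
        = A ^ (m + 1) * X - A ^ (m + 1) * Abar := by
      have inner : A ^ (m + 1) * X * (1 - A * Abar)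
          = A ^ (m + 1) * X - A ^ (m + 1) * Abar := by
        rw [mul_sub, mul_one]
        congr 1
        calc A ^ (m + 1) * X * (A * Abar) = (A ^ (m + 1) * X * A) * Abar := by noncomm_ring
          _ = A ^ (m + 1) * Abar := by rw [s1]
      calc A ^ (m + 1) * (Abar ^ (m + 1) * A ^ (m + 1) * X * (1 - A * Abar))
          = (A ^ (m + 1) * Abar ^ (m + 1)) * (A ^ (m + 1) * X * (1 - A * Abar)) := by noncomm_ring
        _ = (Abar ^ (m + 1) * A ^ (m + 1)) * (A ^ (m + 1) * X - A ^ (m + 1) * Abar) := by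
            rw [hc, inner]
        _ = (Abar ^ (m + 1) * A ^ (m + 1) * A ^ (m + 1)) * X -
            (Abar ^ (m + 1) * A ^ (m + 1) * A ^ (m + 1)) * Abar := by noncomm_ring
        _ = A ^ (m + 1) * X - A ^ (m + 1) * Abar := by rw [Lk]
    have r4 : A ^ (m + 1) * (Abar * A * X * A * Abar) = A ^ (m + 1) * Abar := by
      calc A ^ (m + 1) * (Abar * A * X * A * Abar)
          = (A ^ (m + 1) * Abar) * ((A * X * A) * Abar) := by noncomm_ring
        _ = (A ^ (m + 1) * Abar) * (A * Abar) := by rw [hAXA]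
        _ = (A ^ (m + 1) * Abar * A) * Abar := by noncomm_ring
        _ = A ^ (m + 1) * Abar := by rw [eR2]
    have hAkX : A ^ (m + 1) * X = A ^ (m + 1) * Abar := by
      have expand : A ^ (m + 1) * (Abar * A * Abar -
          (1 - Abar * A) * X * A ^ (m + 1) * Abar ^ (m + 1) -
          Abar ^ (m + 1) * A ^ (m + 1) * X * (1 - A * Abar) - Abar * A * X * A * Abar)
          = A ^ (m + 1) * (Abar * A * Abar) -
            A ^ (m + 1) * ((1 - Abar * A) * X * A ^ (m + 1) * Abar ^ (m + 1)) -
            A ^ (m + 1) * (Abar ^ (m + 1) * A ^ (m + 1) * X * (1 - A * Abar)) -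
            A ^ (m + 1) * (Abar * A * X * A * Abar) := by noncomm_ring
      have h0 := expand
      rw [key, mul_zero, r1, r2, r3, r4] at h0
      have h0' : A ^ (m + 1) * Abar - A ^ (m + 1) * X = 0 := by rw [h0]; abel
      exact (sub_eq_zero.mp h0').symm
    -- right multiplication by A^k
    have u1 : (Abar * A * Abar) * A ^ (m + 1) = A ^ (m + 1) * Abar := by
      calc (Abar * A * Abar) * A ^ (m + 1) = Abar * A * (Abar * A ^ (m + 1)) := by noncomm_ring
        _ = Abar * A * (A ^ (m + 1) * Abar) := by rw [← h2]
        _ = (Abar * A * A ^ (m + 1)) * Abar := by noncomm_ring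
        _ = A ^ (m + 1) * Abar := by rw [eL]
    have u2 : ((1 - Abar * A) * X * A ^ (m + 1) * Abar ^ (m + 1)) * A ^ (m + 1)
        = X * A ^ (m + 1) - Abar * A ^ (m + 1) := by
      have tail : A ^ (m + 1) * Abar ^ (m + 1) * A ^ (m + 1) = A ^ (m + 1) := by
        rw [hc, Lk]
      calc ((1 - Abar * A) * X * A ^ (m + 1) * Abar ^ (m + 1)) * A ^ (m + 1)
          = (1 - Abar * A) * X * (A ^ (m + 1) * Abar ^ (m + 1) * A ^ (m + 1)) := by noncomm_ring
        _ = (1 - Abar * A) * X * A ^ (m + 1) := by rw [tail]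
        _ = X * A ^ (m + 1) - Abar * (A * X * A ^ (m + 1)) := by noncomm_ring
        _ = X * A ^ (m + 1) - Abar * A ^ (m + 1) := by rw [s2]
    have u3 : (Abar ^ (m + 1) * A ^ (m + 1) * X * (1 - A * Abar)) * A ^ (m + 1) = 0 := by
      have z : (1 - A * Abar) * A ^ (m + 1) = 0 := by
        rw [sub_mul, one_mul, eL2, sub_self]
      calc (Abar ^ (m + 1) * A ^ (m + 1) * X * (1 - A * Abar)) * A ^ (m + 1)
          = (Abar ^ (m + 1) * A ^ (m + 1) * X) * ((1 - A * Abar) * A ^ (m + 1)) := by noncomm_ring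
        _ = 0 := by rw [z, mul_zero]
    have u4 : (Abar * A * X * A * Abar) * A ^ (m + 1) = A ^ (m + 1) * Abar := by
      calc (Abar * A * X * A * Abar) * A ^ (m + 1)
          = Abar * A * X * A * (Abar * A ^ (m + 1)) := by noncomm_ring
        _ = Abar * A * X * A * (A ^ (m + 1) * Abar) := by rw [← h2]
        _ = Abar * ((A * X * A) * A ^ (m + 1)) * Abar := by noncomm_ring
        _ = Abar * (A * A ^ (m + 1)) * Abar := by rw [hAXA]
        _ = (Abar * A * A ^ (m + 1)) * Abar := by noncomm_ring
        _ = A ^ (m + 1) * Abar := by rw [eL]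
    have hXAk : X * A ^ (m + 1) = Abar * A ^ (m + 1) := by
      have expand : (Abar * A * Abar -
          (1 - Abar * A) * X * A ^ (m + 1) * Abar ^ (m + 1) -
          Abar ^ (m + 1) * A ^ (m + 1) * X * (1 - A * Abar) - Abar * A * X * A * Abar) *
          A ^ (m + 1)
          = (Abar * A * Abar) * A ^ (m + 1) -
            ((1 - Abar * A) * X * A ^ (m + 1) * Abar ^ (m + 1)) * A ^ (m + 1) -
            (Abar ^ (m + 1) * A ^ (m + 1) * X * (1 - A * Abar)) * A ^ (m + 1) -
            (Abar * A * X * A * Abar) * A ^ (m + 1) := by noncomm_ring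
      have h0 := expand
      rw [key, zero_mul, u1, u2, u3, u4] at h0
      have h0' : Abar * A ^ (m + 1) - X * A ^ (m + 1) = 0 := by rw [h0]; abel
      exact (sub_eq_zero.mp h0').symm
    exact ⟨hAXA, by rw [hAkX, hXAk, h2]⟩

/-- Lemma 2.7: with `X̂ = Ā A Ā`, for every `X` the system
`A X A = A ∧ A^k X = X A^k` is equivalent to the fixed-point form
`X = X̂ + X - (I - Ā A) X A^k Ā^k - Ā^k A^k X (I - A Ā) - Ā A X A Ā`. -/
theorem stmt_16 (p k : ℕ) (hk : 1 ≤ k)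
    (A Abar : Matrix (Fin p) (Fin p) ℂ)
    (h1 : A * Abar * A = A) (h2 : A ^ k * Abar = Abar * A ^ k) :
    ∀ X : Matrix (Fin p) (Fin p) ℂ,
      (A * X * A = A ∧ A ^ k * X = X * A ^ k) ↔
      X = Abar * A * Abar + X - (1 - Abar * A) * X * A ^ k * Abar ^ k -
        Abar ^ k * A ^ k * X * (1 - A * Abar) - Abar * A * X * A * Abar := by
  exact fun X => aux_ring k hk A Abar h1 h2 X
end

section
/- Let $A, \bar{A} \in \mathbb{C}^{p\times p}$ and $k \geq 1$ an integer, where $\bar{A}$ is a $k$-commutative $\{1\}$-inverse of $A$, i.e. $A\bar{A}A = A$ and $A^k \bar{A} = \bar{A} A^k$. Then the formula $X = f(Y) = \bar{A}A\bar{A} + Y - (I - \bar{A}A) Y A^k \bar{A}^k - \bar{A}^k A^k Y (I - A\bar{A}) - \bar{A} A Y A \bar{A}$ gives the general solution of the system $AXA = A \wedge A^k X = X A^k$: for every $Y \in \mathbb{C}^{p\times p}$, $f(Y)$ satisfies $A f(Y) A = A$ and $A^k f(Y) = f(Y) A^k$, and conversely every solution $X$ of the system can be written as $X = f(Y)$ for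 some $Y \in \mathbb{C}^{p\times p}$. -/
theorem gen_sol {R : Type*} [Ring R] (m : ℕ) (a b : R)
    (h1 : a*b*a = a) (h2 : a^(m+1)*b = b*a^(m+1)) :
    (∀ Y : R,
        a * (b * a * b + Y - (1 - b * a) * Y * a ^ (m+1) * b ^ (m+1) -
          b ^ (m+1) * a ^ (m+1) * Y * (1 - a * b) - b * a * Y * a * b) * a = a ∧
        a ^ (m+1) * (b * a * b + Y - (1 - b * a) * Y * a ^ (m+1) * b ^ (m+1) -
          b ^ (m+1) * a ^ (m+1) * Y * (1 - a * b) - b * a * Y * a * b) =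
        (b * a * b + Y - (1 - b * a) * Y * a ^ (m+1) * b ^ (m+1) -
          b ^ (m+1) * a ^ (m+1) * Y * (1 - a * b) - b * a * Y * a * b) * a ^ (m+1)) ∧
    (∀ X : R,
        (a * X * a = a ∧ a ^ (m+1) * X = X * a ^ (m+1)) →
        ∃ Y : R,
          X = b * a * b + Y - (1 - b * a) * Y * a ^ (m+1) * b ^ (m+1) -
            b ^ (m+1) * a ^ (m+1) * Y * (1 - a * b) - b * a * Y * a * b) := by
  have hax : ∀ (n : ℕ) (x : R), a*(a^n*x) = a^n*(a*x) := fun n x => by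
    rw [← mul_assoc, ← pow_succ', pow_succ, mul_assoc]
  have hax' : ∀ n : ℕ, a*a^n = a^n*a := fun n => by rw [← pow_succ', pow_succ]
  have hbx : ∀ (n : ℕ) (x : R), b*(b^n*x) = b^n*(b*x) := fun n x => by
    rw [← mul_assoc, ← pow_succ', pow_succ, mul_assoc]
  have hbx' : ∀ n : ℕ, b*b^n = b^n*b := fun n => by rw [← pow_succ', pow_succ]
  -- basic consequences
  have k1 : a^(m+1)*b*a = a^(m+1) := by
    calc a^(m+1)*b*a = a^m*(a*b*a) := by simp only [pow_succ, mul_assoc, hax, hax']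
    _ = a^m*a := by rw [h1]
    _ = a^(m+1) := (pow_succ a m).symm
  have k2 : a*b*a^(m+1) = a^(m+1) := by
    calc a*b*a^(m+1) = (a*b*a)*a^m := by simp only [pow_succ, mul_assoc, hax, hax']
    _ = a*a^m := by rw [h1]
    _ = a^(m+1) := (pow_succ' a m).symm
  have k3 : b*a*a^(m+1) = a^(m+1) := by
    calc b*a*a^(m+1) = b*a^(m+1)*a := by simp only [pow_succ, mul_assoc, hax, hax']
    _ = a^(m+1)*b*a := by rw [← h2]
    _ = a^(m+1) := k1
  have k4 : a^(m+1)*(a*b) = a^(m+1) := by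
    calc a^(m+1)*(a*b) = a*(a^(m+1)*b) := by simp only [pow_succ, mul_assoc, hax, hax']
    _ = a*(b*a^(m+1)) := by rw [h2]
    _ = a*b*a^(m+1) := by rw [mul_assoc]
    _ = a^(m+1) := k2
  have kc : a^(m+1)*b^(m+1) = b^(m+1)*a^(m+1) := (Commute.pow_right (h2 : Commute _ _) (m+1)).eq
  have claim : ∀ j : ℕ, b^j*a^(m+1)*a^j = a^(m+1) := by
    intro j
    induction j with
    | zero => simp
    | succ n ih =>
      calc b^(n+1)*a^(m+1)*a^(n+1) = b*(b^n*a^(m+1)*a^n)*a := by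
            simp only [pow_succ, mul_assoc, hax, hax', hbx, hbx']
      _ = b*a^(m+1)*a := by rw [ih]
      _ = a^(m+1)*b*a := by rw [← h2]
      _ = a^(m+1) := k1
  have k6 : a^(m+1)*b^(m+1)*a^(m+1) = a^(m+1) := by
    rw [kc]; exact claim (m+1)
  have k7 : a^(m+1)*(a^(m+1)*b^(m+1)) = a^(m+1) := by
    rw [kc, ← mul_assoc]; exact k6
  -- trailing versions
  have R1x : ∀ x : R, a*(b*(a*x)) = a*x := fun x => by
    rw [← mul_assoc, ← mul_assoc, h1]
  have R1' : a*(b*a) = a := by rw [← mul_assoc]; exact h1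
  have R2x : ∀ x : R, a*(b*(a^(m+1)*x)) = a^(m+1)*x := fun x => by
    rw [← mul_assoc, ← mul_assoc, k2]
  have R2' : a*(b*a^(m+1)) = a^(m+1) := by rw [← mul_assoc]; exact k2
  have R3x : ∀ x : R, a^(m+1)*(b*(a*x)) = a^(m+1)*x := fun x => by
    rw [← mul_assoc, ← mul_assoc, k1]
  have R3' : a^(m+1)*(b*a) = a^(m+1) := by rw [← mul_assoc]; exact k1
  have R4x : ∀ x : R, b*(a*(a^(m+1)*x)) = a^(m+1)*x := fun x => by
    rw [← mul_assoc, ← mul_assoc, k3]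
  have R4' : b*(a*a^(m+1)) = a^(m+1) := by rw [← mul_assoc]; exact k3
  have R5x : ∀ x : R, a^(m+1)*(a*(b*x)) = a^(m+1)*x := fun x => by
    calc a^(m+1)*(a*(b*x)) = a^(m+1)*(a*b)*x := by simp only [mul_assoc]
    _ = a^(m+1)*x := by rw [k4]
  have R5' : a^(m+1)*(a*b) = a^(m+1) := k4
  have R6x : ∀ x : R, a^(m+1)*(b^(m+1)*(a^(m+1)*x)) = a^(m+1)*x := fun x => by
    rw [← mul_assoc, ← mul_assoc, k6]
  have R6' : a^(m+1)*(b^(m+1)*a^(m+1)) = a^(m+1) := by rw [← mul_assoc]; exact k6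
  have K7x : ∀ x : R, a^(m+1)*(a^(m+1)*(b^(m+1)*x)) = a^(m+1)*x := fun x => by
    calc a^(m+1)*(a^(m+1)*(b^(m+1)*x)) = a^(m+1)*(a^(m+1)*b^(m+1))*x := by
          simp only [mul_assoc]
    _ = a^(m+1)*x := by rw [k7]
  have K7' : a^(m+1)*(a^(m+1)*b^(m+1)) = a^(m+1) := k7
  have hc' : b*a^(m+1) = a^(m+1)*b := h2.symm
  have hcx : ∀ x : R, b*(a^(m+1)*x) = a^(m+1)*(b*x) := fun x => by
    rw [← mul_assoc, ← h2, mul_assoc]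
  have hck' : b^(m+1)*a^(m+1) = a^(m+1)*b^(m+1) := kc.symm
  have hckx : ∀ x : R, b^(m+1)*(a^(m+1)*x) = a^(m+1)*(b^(m+1)*x) := fun x => by
    rw [← mul_assoc, ← kc, mul_assoc]
  refine ⟨fun Y => ⟨?_, ?_⟩, fun X ⟨hx1, hx2⟩ => ⟨X, ?_⟩⟩
  · simp only [mul_sub, sub_mul, mul_add, add_mul, mul_one, one_mul, mul_assoc,
      R1x, R1', R2x, R2', R3x, R3', R4x, R4', R5x, R5', R6x, R6', K7x, K7',
      hc', hcx, hck', hckx, hax, hax']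
    abel
  · simp only [mul_sub, sub_mul, mul_add, add_mul, mul_one, one_mul, mul_assoc,
      R1x, R1', R2x, R2', R3x, R3', R4x, R4', R5x, R5', R6x, R6', K7x, K7',
      hc', hcx, hck', hckx, hax, hax']
    abel
  · have hx2x : ∀ x : R, X*(a^(m+1)*x) = a^(m+1)*(X*x) := fun x => by
      rw [← mul_assoc, ← hx2, mul_assoc]
    have hx1x : ∀ x : R, a*(X*(a*x)) = a*x := fun x => by
      rw [← mul_assoc, ← mul_assoc, hx1]
    have h3 : (1 - b * a) * X * a ^ (m+1) * b ^ (m+1) = 0 := by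
      simp only [sub_mul, one_mul, mul_assoc, hx2x, R4x]
      exact sub_self _
    have h4 : b ^ (m+1) * a ^ (m+1) * X * (1 - a * b) = 0 := by
      have g : ∀ x : R, a^(m+1)*(X*x) = X*(a^(m+1)*x) := fun x => by
        rw [← mul_assoc, hx2, mul_assoc]
      simp only [mul_sub, mul_one, mul_assoc, g, R5', hx2]
      exact sub_self _
    have h5 : b * a * X * a * b = b * a * b := by
      simp only [mul_assoc, hx1x]
    rw [h3, h4, h5]
    abel


/-- Theorem 2.5: the formula
`X = f(Y) = Ā A Ā + Y - (I - Ā A) Y A^k Ā^k - Ā^k A^k Y (I - A Ā) - Ā A Y A Ā`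
gives the general solution of the system `A X A = A ∧ A^k X = X A^k`. -/
theorem stmt_17 (p k : ℕ) (hk : 1 ≤ k)
    (A Abar : Matrix (Fin p) (Fin p) ℂ)
    (h1 : A * Abar * A = A) (h2 : A ^ k * Abar = Abar * A ^ k) :
    (∀ Y : Matrix (Fin p) (Fin p) ℂ,
        A * (Abar * A * Abar + Y - (1 - Abar * A) * Y * A ^ k * Abar ^ k -
          Abar ^ k * A ^ k * Y * (1 - A * Abar) - Abar * A * Y * A * Abar) * A = A ∧
        A ^ k * (Abar * A * Abar + Y - (1 - Abar * A) * Y * A ^ k * Abar ^ k -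
          Abar ^ k * A ^ k * Y * (1 - A * Abar) - Abar * A * Y * A * Abar) =
        (Abar * A * Abar + Y - (1 - Abar * A) * Y * A ^ k * Abar ^ k -
          Abar ^ k * A ^ k * Y * (1 - A * Abar) - Abar * A * Y * A * Abar) * A ^ k) ∧
    (∀ X : Matrix (Fin p) (Fin p) ℂ,
        (A * X * A = A ∧ A ^ k * X = X * A ^ k) →
        ∃ Y : Matrix (Fin p) (Fin p) ℂ,
          X = Abar * A * Abar + Y - (1 - Abar * A) * Y * A ^ k * Abar ^ k -
            Abar ^ k * A ^ k * Y * (1 - A * Abar) - Abar * A * Y * A * Abar) := by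
  obtain ⟨m, rfl⟩ : ∃ m, k = m + 1 := ⟨k - 1, (Nat.succ_pred_eq_of_pos hk).symm⟩
  exact gen_sol m A Abar h1 h2
end

section
/- Let $A, \bar{A} \in \mathbb{C}^{p\times p}$ and $k \geq 1$ an integer, where $\bar{A}$ is a $k$-commutative $\{1\}$-inverse of $A$, i.e. $A\bar{A}A = A$ and $A^k \bar{A} = \bar{A} A^k$. If $X_0 \in \mathbb{C}^{p\times p}$ is a particular solution of the system $AXA = A \wedge A^k X = X A^k$, then the formula $X = g(Y) = X_0 + Y - (I - \bar{A}A) Y A^k \bar{A}^k - \bar{A}^k A^k Y (I - A\bar{A}) - \bar{A} A Y A \bar{A}$ gives the general solution of the system: for every $Y \in \mathbb{C}^{p\times p}$, $g(Y)$ satisfies $A g(Y) A = A$ and $A^k g(Y) = g(Y) A^k$, and conversely every solution $X$ of the system can be written as $X = g(Y)$ for some $Y \in \mathbb{C}^{p\times p}$. -/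
/-- Theorem 2.6: if `X₀` is a particular solution of `A X A = A ∧ A^k X = X A^k`,
the formula `X = g(Y) = X₀ + Y - (I - Ā A) Y A^k Ā^k - Ā^k A^k Y (I - A Ā) - Ā A Y A Ā`
gives the general solution of the system. -/
theorem stmt_18 (p k : ℕ) (hk : 1 ≤ k)
    (A Abar : Matrix (Fin p) (Fin p) ℂ)
    (h1 : A * Abar * A = A) (h2 : A ^ k * Abar = Abar * A ^ k)
    (X₀ : Matrix (Fin p) (Fin p) ℂ)
    (hX₀ : A * X₀ * A = A ∧ A ^ k * X₀ = X₀ * A ^ k) :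
    (∀ Y : Matrix (Fin p) (Fin p) ℂ,
        A * (X₀ + Y - (1 - Abar * A) * Y * A ^ k * Abar ^ k -
          Abar ^ k * A ^ k * Y * (1 - A * Abar) - Abar * A * Y * A * Abar) * A = A ∧
        A ^ k * (X₀ + Y - (1 - Abar * A) * Y * A ^ k * Abar ^ k -
          Abar ^ k * A ^ k * Y * (1 - A * Abar) - Abar * A * Y * A * Abar) =
        (X₀ + Y - (1 - Abar * A) * Y * A ^ k * Abar ^ k -
          Abar ^ k * A ^ k * Y * (1 - A * Abar) - Abar * A * Y * A * Abar) * A ^ k) ∧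
    (∀ X : Matrix (Fin p) (Fin p) ℂ,
        (A * X * A = A ∧ A ^ k * X = X * A ^ k) →
        ∃ Y : Matrix (Fin p) (Fin p) ℂ,
          X = X₀ + Y - (1 - Abar * A) * Y * A ^ k * Abar ^ k -
            Abar ^ k * A ^ k * Y * (1 - A * Abar) - Abar * A * Y * A * Abar) := by
  obtain ⟨m, rfl⟩ : ∃ m, k = m + 1 := ⟨k - 1, (Nat.succ_pred_eq_of_pos hk).symm⟩
  -- key identities
  have hk1 : A ^ (m + 1) * Abar * A = A ^ (m + 1) := by
    calc A ^ (m + 1) * Abar * A = A ^ m * (A * Abar * A) := by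
          rw [pow_succ]; simp only [mul_assoc]
      _ = A ^ m * A := by rw [h1]
      _ = A ^ (m + 1) := (pow_succ A m).symm
  have hk2 : A * Abar * A ^ (m + 1) = A ^ (m + 1) := by
    calc A * Abar * A ^ (m + 1) = A * Abar * A * A ^ m := by
          rw [pow_succ']; simp only [mul_assoc]
      _ = A * A ^ m := by rw [h1]
      _ = A ^ (m + 1) := (pow_succ' A m).symm
  have hb : A ^ (m + 1) * (A * Abar) = A ^ (m + 1) := by
    calc A ^ (m + 1) * (A * Abar) = A ^ (m + 1 + 1) * Abar := by
          rw [← mul_assoc, ← pow_succ]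
      _ = A * (Abar * A ^ (m + 1)) := by rw [pow_succ', mul_assoc, h2]
      _ = A * Abar * A ^ (m + 1) := by rw [← mul_assoc]
      _ = A ^ (m + 1) := hk2
  have Q : ∀ j : ℕ, Abar ^ j * A ^ (m + 1) * A ^ j = A ^ (m + 1) := by
    intro j
    induction j with
    | zero => simp
    | succ n ih =>
      calc Abar ^ (n + 1) * A ^ (m + 1) * A ^ (n + 1)
          = Abar ^ n * (Abar * A ^ (m + 1) * A) * A ^ n := by
            rw [pow_succ Abar n, pow_succ' A n]; simp only [mul_assoc]
        _ = Abar ^ n * (A ^ (m + 1) * Abar * A) * A ^ n := by rw [← h2]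
        _ = Abar ^ n * A ^ (m + 1) * A ^ n := by rw [hk1]
        _ = A ^ (m + 1) := ih
  have hcomm : A ^ (m + 1) * Abar ^ (m + 1) = Abar ^ (m + 1) * A ^ (m + 1) :=
    (Commute.pow_right (h2 : Commute (A ^ (m + 1)) Abar) (m + 1)).eq
  have hkk : A ^ (m + 1) * Abar ^ (m + 1) * A ^ (m + 1) = A ^ (m + 1) := by
    rw [hcomm]; exact Q (m + 1)
  constructor
  · intro Y
    constructor
    · -- A g(Y) A = A
      have z1 : A * (1 - Abar * A) = 0 := by
        rw [mul_sub, mul_one, ← mul_assoc, h1, sub_self]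
      have z2 : (1 - A * Abar) * A = 0 := by
        rw [sub_mul, one_mul, h1, sub_self]
      have e2 : A * ((1 - Abar * A) * Y * A ^ (m + 1) * Abar ^ (m + 1)) * A = 0 := by
        calc A * ((1 - Abar * A) * Y * A ^ (m + 1) * Abar ^ (m + 1)) * A
            = A * (1 - Abar * A) * (Y * A ^ (m + 1) * Abar ^ (m + 1) * A) := by
              simp only [mul_assoc]
          _ = 0 := by rw [z1, zero_mul]
      have e3 : A * (Abar ^ (m + 1) * A ^ (m + 1) * Y * (1 - A * Abar)) * A = 0 := by
        calc A * (Abar ^ (m + 1) * A ^ (m + 1) * Y * (1 - A * Abar)) * A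
            = A * Abar ^ (m + 1) * A ^ (m + 1) * Y * ((1 - A * Abar) * A) := by
              simp only [mul_assoc]
          _ = 0 := by rw [z2, mul_zero]
      have e4 : A * (Abar * A * Y * A * Abar) * A = A * Y * A := by
        calc A * (Abar * A * Y * A * Abar) * A
            = A * Abar * A * (Y * (A * Abar * A)) := by simp only [mul_assoc]
          _ = A * (Y * A) := by rw [h1]
          _ = A * Y * A := by rw [← mul_assoc]
      calc A * (X₀ + Y - (1 - Abar * A) * Y * A ^ (m + 1) * Abar ^ (m + 1) -
            Abar ^ (m + 1) * A ^ (m + 1) * Y * (1 - A * Abar) - Abar * A * Y * A * Abar) * A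
          = A * X₀ * A + A * Y * A -
              A * ((1 - Abar * A) * Y * A ^ (m + 1) * Abar ^ (m + 1)) * A -
              A * (Abar ^ (m + 1) * A ^ (m + 1) * Y * (1 - A * Abar)) * A -
              A * (Abar * A * Y * A * Abar) * A := by noncomm_ring
        _ = A + A * Y * A - 0 - 0 - A * Y * A := by rw [hX₀.1, e2, e3, e4]
        _ = A := by noncomm_ring
    · -- A^k g(Y) = g(Y) A^k
      have c2a : A ^ (m + 1) * ((1 - Abar * A) * Y * A ^ (m + 1) * Abar ^ (m + 1)) = 0 := by
        have z : A ^ (m + 1) * (1 - Abar * A) = 0 := by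
          rw [mul_sub, mul_one, ← mul_assoc, hk1, sub_self]
        calc A ^ (m + 1) * ((1 - Abar * A) * Y * A ^ (m + 1) * Abar ^ (m + 1))
            = A ^ (m + 1) * (1 - Abar * A) * (Y * A ^ (m + 1) * Abar ^ (m + 1)) := by
              simp only [mul_assoc]
          _ = 0 := by rw [z, zero_mul]
      have c2b : ((1 - Abar * A) * Y * A ^ (m + 1) * Abar ^ (m + 1)) * A ^ (m + 1) =
          (1 - Abar * A) * Y * A ^ (m + 1) := by
        calc ((1 - Abar * A) * Y * A ^ (m + 1) * Abar ^ (m + 1)) * A ^ (m + 1)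
            = (1 - Abar * A) * Y * (A ^ (m + 1) * Abar ^ (m + 1) * A ^ (m + 1)) := by
              simp only [mul_assoc]
          _ = (1 - Abar * A) * Y * A ^ (m + 1) := by rw [hkk]
      have c3a : A ^ (m + 1) * (Abar ^ (m + 1) * A ^ (m + 1) * Y * (1 - A * Abar)) =
          A ^ (m + 1) * Y * (1 - A * Abar) := by
        calc A ^ (m + 1) * (Abar ^ (m + 1) * A ^ (m + 1) * Y * (1 - A * Abar))
            = A ^ (m + 1) * Abar ^ (m + 1) * A ^ (m + 1) * (Y * (1 - A * Abar)) := by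
              simp only [mul_assoc]
          _ = A ^ (m + 1) * (Y * (1 - A * Abar)) := by rw [hkk]
          _ = A ^ (m + 1) * Y * (1 - A * Abar) := by rw [← mul_assoc]
      have c3b : (Abar ^ (m + 1) * A ^ (m + 1) * Y * (1 - A * Abar)) * A ^ (m + 1) = 0 := by
        have z : (1 - A * Abar) * A ^ (m + 1) = 0 := by
          rw [sub_mul, one_mul, hk2, sub_self]
        calc (Abar ^ (m + 1) * A ^ (m + 1) * Y * (1 - A * Abar)) * A ^ (m + 1)
            = Abar ^ (m + 1) * A ^ (m + 1) * Y * ((1 - A * Abar) * A ^ (m + 1)) := by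
              simp only [mul_assoc]
          _ = 0 := by rw [z, mul_zero]
      have c4a : A ^ (m + 1) * (Abar * A * Y * A * Abar) =
          A ^ (m + 1) * Y * (A * Abar) := by
        calc A ^ (m + 1) * (Abar * A * Y * A * Abar)
            = A ^ (m + 1) * Abar * A * (Y * (A * Abar)) := by simp only [mul_assoc]
          _ = A ^ (m + 1) * (Y * (A * Abar)) := by rw [hk1]
          _ = A ^ (m + 1) * Y * (A * Abar) := by rw [← mul_assoc]
      have c4b : (Abar * A * Y * A * Abar) * A ^ (m + 1) =
          Abar * A * Y * A ^ (m + 1) := by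
        calc (Abar * A * Y * A * Abar) * A ^ (m + 1)
            = Abar * A * Y * (A * Abar * A ^ (m + 1)) := by simp only [mul_assoc]
          _ = Abar * A * Y * A ^ (m + 1) := by rw [hk2]
      calc A ^ (m + 1) * (X₀ + Y - (1 - Abar * A) * Y * A ^ (m + 1) * Abar ^ (m + 1) -
            Abar ^ (m + 1) * A ^ (m + 1) * Y * (1 - A * Abar) - Abar * A * Y * A * Abar)
          = A ^ (m + 1) * X₀ + A ^ (m + 1) * Y -
              A ^ (m + 1) * ((1 - Abar * A) * Y * A ^ (m + 1) * Abar ^ (m + 1)) -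
              A ^ (m + 1) * (Abar ^ (m + 1) * A ^ (m + 1) * Y * (1 - A * Abar)) -
              A ^ (m + 1) * (Abar * A * Y * A * Abar) := by noncomm_ring
        _ = X₀ * A ^ (m + 1) + A ^ (m + 1) * Y - 0 -
              A ^ (m + 1) * Y * (1 - A * Abar) - A ^ (m + 1) * Y * (A * Abar) := by
            rw [hX₀.2, c2a, c3a, c4a]
        _ = X₀ * A ^ (m + 1) + Y * A ^ (m + 1) - (1 - Abar * A) * Y * A ^ (m + 1) - 0 -
              Abar * A * Y * A ^ (m + 1) := by noncomm_ring
        _ = X₀ * A ^ (m + 1) + Y * A ^ (m + 1) -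
              ((1 - Abar * A) * Y * A ^ (m + 1) * Abar ^ (m + 1)) * A ^ (m + 1) -
              (Abar ^ (m + 1) * A ^ (m + 1) * Y * (1 - A * Abar)) * A ^ (m + 1) -
              (Abar * A * Y * A * Abar) * A ^ (m + 1) := by rw [c2b, c3b, c4b]
        _ = (X₀ + Y - (1 - Abar * A) * Y * A ^ (m + 1) * Abar ^ (m + 1) -
              Abar ^ (m + 1) * A ^ (m + 1) * Y * (1 - A * Abar) -
              Abar * A * Y * A * Abar) * A ^ (m + 1) := by noncomm_ring
  · intro X hX
    refine ⟨X - X₀, ?_⟩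
    have hz1 : A * (X - X₀) * A = 0 := by
      rw [mul_sub, sub_mul, hX.1, hX₀.1, sub_self]
    have hz2 : A ^ (m + 1) * (X - X₀) = (X - X₀) * A ^ (m + 1) := by
      rw [mul_sub, sub_mul, hX.2, hX₀.2]
    have hzA : (X - X₀) * A ^ (m + 1) * A = 0 := by
      calc (X - X₀) * A ^ (m + 1) * A = A ^ (m + 1) * (X - X₀) * A := by rw [← hz2]
        _ = A ^ m * (A * (X - X₀) * A) := by rw [pow_succ]; simp only [mul_assoc]
        _ = 0 := by rw [hz1, mul_zero]
    have hzk : (X - X₀) * A ^ (m + 1) = 0 := by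
      calc (X - X₀) * A ^ (m + 1) = (X - X₀) * (A ^ (m + 1) * (A * Abar)) := by rw [hb]
        _ = (X - X₀) * A ^ (m + 1) * A * Abar := by simp only [mul_assoc]
        _ = 0 := by rw [hzA, zero_mul]
    have hzk' : A ^ (m + 1) * (X - X₀) = 0 := by rw [hz2, hzk]
    have t2 : (1 - Abar * A) * (X - X₀) * A ^ (m + 1) * Abar ^ (m + 1) = 0 := by
      calc (1 - Abar * A) * (X - X₀) * A ^ (m + 1) * Abar ^ (m + 1)
          = (1 - Abar * A) * ((X - X₀) * A ^ (m + 1)) * Abar ^ (m + 1) := by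
            simp only [mul_assoc]
        _ = 0 := by rw [hzk, mul_zero, zero_mul]
    have t3 : Abar ^ (m + 1) * A ^ (m + 1) * (X - X₀) * (1 - A * Abar) = 0 := by
      calc Abar ^ (m + 1) * A ^ (m + 1) * (X - X₀) * (1 - A * Abar)
          = Abar ^ (m + 1) * (A ^ (m + 1) * (X - X₀)) * (1 - A * Abar) := by
            simp only [mul_assoc]
        _ = 0 := by rw [hzk', mul_zero, zero_mul]
    have t4 : Abar * A * (X - X₀) * A * Abar = 0 := by
      calc Abar * A * (X - X₀) * A * Abar
          = Abar * (A * (X - X₀) * A) * Abar := by simp only [mul_assoc]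
        _ = 0 := by rw [hz1, mul_zero, zero_mul]
    rw [t2, t3, t4]
    noncomm_ring
end

section
/- Let $A, \bar{A} \in \mathbb{C}^{p\times p}$ and $k \geq 1$ an integer, where $\bar{A}$ is a $k$-commutative $\{1\}$-inverse of $A$, i.e. $A\bar{A}A = A$ and $A^k \bar{A} = \bar{A} A^k$. Set $\hat{X} = \bar{A} A \bar{A}$, let $X_0$ be a particular solution of the system $AXA = A \wedge A^k X = X A^k$, and define $g(Y) = X_0 + Y - (I - \bar{A}A) Y A^k \bar{A}^k - \bar{A}^k A^k Y (I - A\bar{A}) - \bar{A} A Y A \bar{A}$. Then $g(g(Y)) = g(Y) + (X_0 - \hat{X})$ for all $Y$; consequently $g$ satisfies the condition of reproductivity ($g \circ g = g$) if and only if $X_0 = \hat{X}$. -/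
theorem gg_aux {R : Type*} [Ring R] (e f s X h : R)
    (he : e * e = e) (hf : f * f = f) (hs : s * s = s)
    (hfs : f * s = s) (hse : s * e = s)
    (hX1 : e * X * s = X * s) (hX2 : s * X * f = s * X) (hX3 : e * X * f = h)
    (g : R → R)
    (hg : ∀ Y, g Y = X + Y - (1 - e) * Y * s - s * Y * (1 - f) - e * Y * f) :
    ∀ Y, g (g Y) = g Y + (X - h) := by
  intro Y
  set P : R → R := fun Z => (1 - e) * Z * s + s * Z * (1 - f) + e * Z * f with hP
  have hgP : ∀ Z, g Z = X + Z - P Z := by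
    intro Z; rw [hg]; simp only [hP]; noncomm_ring
  have hPadd : ∀ U V, P (U + V) = P U + P V := by intro U V; simp only [hP]; noncomm_ring
  have hPsub : ∀ U V, P (U - V) = P U - P V := by intro U V; simp only [hP]; noncomm_ring
  have hPX : P X = h := by
    simp only [hP]
    have t1 : (1 - e) * X * s = 0 := by
      have : (1 - e) * X * s = X * s - e * X * s := by noncomm_ring
      rw [this, hX1, sub_self]
    have t2 : s * X * (1 - f) = 0 := by
      have : s * X * (1 - f) = s * X - s * X * f := by noncomm_ring
      rw [this, hX2, sub_self]
    rw [t1, t2, hX3, zero_add, zero_add]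
  have hPP : ∀ Z, P (P Z) = P Z := by
    intro Z
    have hee : (1 - e) * (1 - e) = 1 - e := by
      have : (1 - e) * (1 - e) = 1 - e - (e - e * e) := by noncomm_ring
      rw [this, he, sub_self, sub_zero]
    have hff : (1 - f) * (1 - f) = 1 - f := by
      have : (1 - f) * (1 - f) = 1 - f - (f - f * f) := by noncomm_ring
      rw [this, hf, sub_self, sub_zero]
    have hfs0 : (1 - f) * s = 0 := by
      have : (1 - f) * s = s - f * s := by noncomm_ring
      rw [this, hfs, sub_self]
    have hse0 : s * (1 - e) = 0 := by
      have : s * (1 - e) = s - s * e := by noncomm_ring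
      rw [this, hse, sub_self]
    have he0 : (1 - e) * e = 0 := by
      have : (1 - e) * e = e - e * e := by noncomm_ring
      rw [this, he, sub_self]
    have he0' : e * (1 - e) = 0 := by
      have : e * (1 - e) = e - e * e := by noncomm_ring
      rw [this, he, sub_self]
    have hf0 : f * (1 - f) = 0 := by
      have : f * (1 - f) = f - f * f := by noncomm_ring
      rw [this, hf, sub_self]
    have hf0' : (1 - f) * f = 0 := by
      have : (1 - f) * f = f - f * f := by noncomm_ring
      rw [this, hf, sub_self]
    simp only [hP]
    have expand : (1 - e) * ((1 - e) * Z * s + s * Z * (1 - f) + e * Z * f) * s +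
        s * ((1 - e) * Z * s + s * Z * (1 - f) + e * Z * f) * (1 - f) +
        e * ((1 - e) * Z * s + s * Z * (1 - f) + e * Z * f) * f
        = ((1 - e) * (1 - e)) * Z * (s * s)
          + (1 - e) * s * Z * ((1 - f) * s)
          + ((1 - e) * e) * Z * (f * s)
          + (s * (1 - e)) * Z * (s * (1 - f))
          + (s * s) * Z * ((1 - f) * (1 - f))
          + (s * e) * Z * (f * (1 - f))
          + (e * (1 - e)) * Z * (s * f)
          + (e * s) * Z * ((1 - f) * f)
          + (e * e) * Z * f * f := by noncomm_ring
    rw [expand, hee, hs, hfs0, he0, hse0, hff, hf0, he0', hf0', he]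
    simp [mul_assoc, hf]
  have key : P (g Y) = h := by
    rw [hgP Y, hPsub (X + Y) (P Y), hPP Y, hPadd X Y, hPX]
    abel
  rw [hgP (g Y), key]
  abel

/-- Remark 2.7: with `X̂ = Ā A Ā` and
`g(Y) = X₀ + Y - (I - Ā A) Y A^k Ā^k - Ā^k A^k Y (I - A Ā) - Ā A Y A Ā`,
one has `g(g(Y)) = g(Y) + (X₀ - X̂)`; hence `g` is reproductive iff `X₀ = X̂`. -/
theorem stmt_19 (p k : ℕ) (hk : 1 ≤ k)
    (A Abar : Matrix (Fin p) (Fin p) ℂ)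
    (h1 : A * Abar * A = A) (h2 : A ^ k * Abar = Abar * A ^ k)
    (X₀ : Matrix (Fin p) (Fin p) ℂ)
    (hX₀ : A * X₀ * A = A ∧ A ^ k * X₀ = X₀ * A ^ k)
    (g : Matrix (Fin p) (Fin p) ℂ → Matrix (Fin p) (Fin p) ℂ)
    (hg : ∀ Y, g Y = X₀ + Y - (1 - Abar * A) * Y * A ^ k * Abar ^ k -
        Abar ^ k * A ^ k * Y * (1 - A * Abar) - Abar * A * Y * A * Abar) :
    (∀ Y : Matrix (Fin p) (Fin p) ℂ, g (g Y) = g Y + (X₀ - Abar * A * Abar)) ∧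
    (g ∘ g = g ↔ X₀ = Abar * A * Abar) := by
  obtain ⟨m, rfl⟩ : ∃ m, k = m + 1 := ⟨k - 1, (Nat.succ_pred_eq_of_pos hk).symm⟩
  have hC : Commute (A ^ (m + 1)) Abar := h2
  have hcomm : A ^ (m + 1) * Abar ^ (m + 1) = Abar ^ (m + 1) * A ^ (m + 1) :=
    (hC.pow_right (m + 1)).eq
  have hX2c : A ^ (m + 1) * X₀ = X₀ * A ^ (m + 1) := hX₀.2
  have hk1 : A ^ (m + 1) * Abar * A = A ^ (m + 1) := by
    calc A ^ (m + 1) * Abar * A = A ^ m * (A * Abar * A) := by noncomm_ring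
      _ = A ^ m * A := by rw [h1]
      _ = A ^ (m + 1) := by noncomm_ring
  have hAbAk : A * Abar * A ^ (m + 1) = A ^ (m + 1) := by
    calc A * Abar * A ^ (m + 1) = A * Abar * (A * A ^ m) := by rw [pow_succ']
      _ = (A * Abar * A) * A ^ m := by rw [← mul_assoc]
      _ = A * A ^ m := by rw [h1]
      _ = A ^ (m + 1) := (pow_succ' A m).symm
  have hAA : A ^ (m + 1) * A = A * A ^ (m + 1) := by rw [← pow_succ, ← pow_succ']
  have hbAk1 : Abar * (A ^ (m + 1) * A) = A ^ (m + 1) := by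
    calc Abar * (A ^ (m + 1) * A) = (Abar * A ^ (m + 1)) * A := by rw [mul_assoc]
      _ = (A ^ (m + 1) * Abar) * A := by rw [h2]
      _ = A ^ (m + 1) := hk1
  have hbA1 : Abar * (A * A ^ (m + 1)) = A ^ (m + 1) := by
    rw [← hAA]; exact hbAk1
  have hAk1b : (A ^ (m + 1) * A) * Abar = A ^ (m + 1) := by
    calc (A ^ (m + 1) * A) * Abar = (A * A ^ (m + 1)) * Abar := by rw [hAA]
      _ = A * (A ^ (m + 1) * Abar) := by rw [mul_assoc]
      _ = A * (Abar * A ^ (m + 1)) := by rw [h2]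
      _ = A * Abar * A ^ (m + 1) := by rw [mul_assoc]
      _ = A ^ (m + 1) := hAbAk
  -- Abar * A^(m+1+j+1) = A^(m+1+j)
  have hstep : ∀ j, Abar * A ^ (m + 1 + j + 1) = A ^ (m + 1 + j) := by
    intro j
    have hp : A ^ (m + 1 + j + 1) = (A ^ (m + 1) * A) * A ^ j := by
      rw [← pow_succ, ← pow_add, Nat.add_right_comm]
    rw [hp, ← mul_assoc, hbAk1, ← pow_add]
  have hHj : ∀ j, Abar ^ j * A ^ (m + 1 + j) = A ^ (m + 1) := by
    intro j
    induction j with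
    | zero => simp
    | succ n ih =>
      calc Abar ^ (n + 1) * A ^ (m + 1 + (n + 1))
          = Abar ^ n * (Abar * A ^ (m + 1 + n + 1)) := by
            rw [pow_succ, mul_assoc]
            rfl
        _ = Abar ^ n * A ^ (m + 1 + n) := by rw [hstep n]
        _ = A ^ (m + 1) := ih
  have hj : ∀ j, A ^ (m + 1) * Abar ^ j * A ^ j = A ^ (m + 1) := by
    intro j
    have hCj : A ^ (m + 1) * Abar ^ j = Abar ^ j * A ^ (m + 1) := (hC.pow_right j).eq
    calc A ^ (m + 1) * Abar ^ j * A ^ j = (Abar ^ j * A ^ (m + 1)) * A ^ j := by rw [hCj]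
      _ = Abar ^ j * A ^ (m + 1 + j) := by rw [mul_assoc, ← pow_add]
      _ = A ^ (m + 1) := hHj j
  have he : (Abar * A) * (Abar * A) = Abar * A := by
    calc (Abar * A) * (Abar * A) = Abar * (A * Abar * A) := by noncomm_ring
      _ = Abar * A := by rw [h1]
  have hf : (A * Abar) * (A * Abar) = A * Abar := by
    calc (A * Abar) * (A * Abar) = (A * Abar * A) * Abar := by noncomm_ring
      _ = A * Abar := by rw [h1]
  have hs : (A ^ (m + 1) * Abar ^ (m + 1)) * (A ^ (m + 1) * Abar ^ (m + 1))
      = A ^ (m + 1) * Abar ^ (m + 1) := by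
    calc (A ^ (m + 1) * Abar ^ (m + 1)) * (A ^ (m + 1) * Abar ^ (m + 1))
        = (A ^ (m + 1) * Abar ^ (m + 1) * A ^ (m + 1)) * Abar ^ (m + 1) := by noncomm_ring
      _ = A ^ (m + 1) * Abar ^ (m + 1) := by rw [hj (m + 1)]
  have hfs : (A * Abar) * (A ^ (m + 1) * Abar ^ (m + 1)) = A ^ (m + 1) * Abar ^ (m + 1) := by
    calc (A * Abar) * (A ^ (m + 1) * Abar ^ (m + 1))
        = (A * Abar * A ^ (m + 1)) * Abar ^ (m + 1) := by noncomm_ring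
      _ = A ^ (m + 1) * Abar ^ (m + 1) := by rw [hAbAk]
  have hc1 : A ^ (m + 1) * Abar ^ (m + 1 + 1) = Abar ^ (m + 1 + 1) * A ^ (m + 1) :=
    (hC.pow_right (m + 1 + 1)).eq
  have hse : (A ^ (m + 1) * Abar ^ (m + 1)) * (Abar * A) = A ^ (m + 1) * Abar ^ (m + 1) := by
    calc (A ^ (m + 1) * Abar ^ (m + 1)) * (Abar * A)
        = (A ^ (m + 1) * Abar ^ (m + 1 + 1)) * A := by noncomm_ring
      _ = (Abar ^ (m + 1 + 1) * A ^ (m + 1)) * A := by rw [hc1]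
      _ = Abar ^ (m + 1) * (Abar * (A ^ (m + 1) * A)) := by noncomm_ring
      _ = Abar ^ (m + 1) * A ^ (m + 1) := by rw [hbAk1]
      _ = A ^ (m + 1) * Abar ^ (m + 1) := hcomm.symm
  have hX1f : (Abar * A) * X₀ * (A ^ (m + 1) * Abar ^ (m + 1))
      = X₀ * (A ^ (m + 1) * Abar ^ (m + 1)) := by
    calc (Abar * A) * X₀ * (A ^ (m + 1) * Abar ^ (m + 1))
        = Abar * (A * ((X₀ * A ^ (m + 1)) * Abar ^ (m + 1))) := by noncomm_ring
      _ = Abar * (A * ((A ^ (m + 1) * X₀) * Abar ^ (m + 1))) := by rw [← hX2c]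
      _ = (Abar * (A * A ^ (m + 1))) * (X₀ * Abar ^ (m + 1)) := by noncomm_ring
      _ = A ^ (m + 1) * (X₀ * Abar ^ (m + 1)) := by rw [hbA1]
      _ = (A ^ (m + 1) * X₀) * Abar ^ (m + 1) := by noncomm_ring
      _ = (X₀ * A ^ (m + 1)) * Abar ^ (m + 1) := by rw [hX2c]
      _ = X₀ * (A ^ (m + 1) * Abar ^ (m + 1)) := by noncomm_ring
  have hX2f : (A ^ (m + 1) * Abar ^ (m + 1)) * X₀ * (A * Abar)
      = (A ^ (m + 1) * Abar ^ (m + 1)) * X₀ := by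
    calc (A ^ (m + 1) * Abar ^ (m + 1)) * X₀ * (A * Abar)
        = (Abar ^ (m + 1) * A ^ (m + 1)) * X₀ * (A * Abar) := by rw [hcomm]
      _ = Abar ^ (m + 1) * ((A ^ (m + 1) * X₀) * (A * Abar)) := by noncomm_ring
      _ = Abar ^ (m + 1) * ((X₀ * A ^ (m + 1)) * (A * Abar)) := by rw [hX2c]
      _ = Abar ^ (m + 1) * (X₀ * ((A ^ (m + 1) * A) * Abar)) := by noncomm_ring
      _ = Abar ^ (m + 1) * (X₀ * A ^ (m + 1)) := by rw [hAk1b]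
      _ = Abar ^ (m + 1) * (A ^ (m + 1) * X₀) := by rw [← hX2c]
      _ = (Abar ^ (m + 1) * A ^ (m + 1)) * X₀ := by noncomm_ring
      _ = (A ^ (m + 1) * Abar ^ (m + 1)) * X₀ := by rw [hcomm]
  have hX3f : (Abar * A) * X₀ * (A * Abar) = Abar * A * Abar := by
    calc (Abar * A) * X₀ * (A * Abar) = Abar * (A * X₀ * A) * Abar := by noncomm_ring
      _ = Abar * A * Abar := by rw [hX₀.1]
  have hg' : ∀ Y, g Y = X₀ + Y - (1 - Abar * A) * Y * (A ^ (m + 1) * Abar ^ (m + 1)) -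
      (A ^ (m + 1) * Abar ^ (m + 1)) * Y * (1 - A * Abar) - (Abar * A) * Y * (A * Abar) := by
    intro Y
    rw [hg Y, ← hcomm]
    noncomm_ring
  have main := gg_aux (Abar * A) (A * Abar) (A ^ (m + 1) * Abar ^ (m + 1)) X₀ (Abar * A * Abar)
    he hf hs hfs hse hX1f hX2f hX3f g hg'
  refine ⟨main, ?_, ?_⟩
  · intro hgg
    have h0 : g (g 0) = g 0 := congrFun hgg 0
    have hm := main 0
    rw [h0] at hm
    exact sub_eq_zero.mp (left_eq_add.mp hm)
  · intro hX
    funext Y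
    show g (g Y) = g Y
    rw [main Y, hX, sub_self, add_zero]
end
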